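/- arXiv:2309.17306 — 4 statements merged into one kernel-verified Lean document; each statement's English description precedes it below -/
import Mathlib

section
/- Let d ≥ 1, let ν be a σ-finite measure on ℝ^d, and let c_ν > 0 be such that ∫_{B(0,1)} ‖z‖² dν(z) < ∞ and ∫_{‖z‖≥1} exp(c_ν‖z‖) dν(z) < ∞. Let c_γ, M > 0, let a ∈ ℝ with |a| ≤ M, and let w ∈ ℝ^d with ‖w‖ ≤ c_γ. Then for every y > 0 with 2 y |a| c_γ ≤ c_ν, one has ∫_{ℝ^d} (exp(y a ⟨w, z⟩) − 1 − y a ⟨w, z⟩) dν(z) ≤ c₁ y² a², where c₁ := c_γ² ( (1/2) exp(c_ν/2) ∫_{B(0,1)} ‖z‖² dν(z) + 4 c_ν^{−2} ∫_{‖z‖≥1} exp(c_ν‖z‖) dν(z) ). -/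
/-!
Write `t = y a ⟨w, z⟩`, so that `|t| ≤ κ ‖z‖` with `κ = y |a| c_γ ≤ c_ν / 2`. Comparing the
exponential series termwise gives `exp t - 1 - t ≤ t² / 2 · exp |t|`. On the unit ball this is at
most `κ² / 2 · exp (c_ν / 2) · ‖z‖²`; off the ball `exp |t| ≤ exp (c_ν ‖z‖ / 2)`, and the
factor `‖z‖²` is absorbed by the other half of the exponential through
`‖z‖² ≤ 8 / c_ν² · exp (c_ν ‖z‖ / 2)`. Integrating the two bounds gives the claim.
-/

open MeasureTheory Real
open scoped Nat

theorem Real.exp_sub_one_sub_le_sq_div_two_mul_exp_abs (t : ℝ) :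
    exp t - 1 - t ≤ t ^ 2 / 2 * exp |t| := by
  have htail : HasSum (fun n : ℕ => t ^ (n + 2) / (n + 2)!) (exp t - 1 - t) := by
    have := (hasSum_nat_add_iff' 2).2 (NormedSpace.expSeries_div_hasSum_exp (𝔸 := ℝ) t)
    simpa [← Real.exp_eq_exp_ℝ, Finset.sum_range_succ, sub_sub] using this
  have hmajor : HasSum (fun n : ℕ => t ^ 2 / 2 * (|t| ^ n / n !)) (t ^ 2 / 2 * exp |t|) := by
    rw [Real.exp_eq_exp_ℝ]
    exact (NormedSpace.expSeries_div_hasSum_exp |t|).mul_left _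
  refine hasSum_le (fun n => ?_) htail hmajor
  have hfac : (n ! * 2 : ℝ) ≤ (n + 2)! := by
    exact_mod_cast
      Nat.le_of_dvd (Nat.factorial_pos _) (Nat.factorial_mul_factorial_dvd_factorial_add n 2)
  calc t ^ (n + 2) / (n + 2)! ≤ |t| ^ (n + 2) / (n + 2)! := by
        gcongr ?_ / _; exact (le_abs_self _).trans_eq (abs_pow t _)
    _ ≤ |t| ^ (n + 2) / (n ! * 2) := by gcongr
    _ = t ^ 2 / 2 * (|t| ^ n / n !) := by rw [pow_add, sq_abs]; field_simp

theorem Real.exp_sub_one_sub_le_of_abs_le {t s : ℝ} (h : |t| ≤ s) :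
    exp t - 1 - t ≤ s ^ 2 / 2 * exp s := by
  have hsq : t ^ 2 ≤ s ^ 2 := by
    rw [← sq_abs]; exact pow_le_pow_left₀ (abs_nonneg t) h 2
  calc exp t - 1 - t ≤ t ^ 2 / 2 * exp |t| := exp_sub_one_sub_le_sq_div_two_mul_exp_abs t
    _ ≤ s ^ 2 / 2 * exp s := by gcongr

theorem Real.sq_mul_exp_half_mul_le {c r : ℝ} (hc : 0 < c) (hr : 0 ≤ r) :
    r ^ 2 * exp (c / 2 * r) ≤ 8 / c ^ 2 * exp (c * r) := by
  have h := pow_div_factorial_le_exp (c / 2 * r) (by positivity) 2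
  calc r ^ 2 * exp (c / 2 * r) = 8 / c ^ 2 * ((c / 2 * r) ^ 2 / 2 !) * exp (c / 2 * r) := by
        rw [Nat.factorial_two, Nat.cast_ofNat]; field_simp; ring
    _ ≤ 8 / c ^ 2 * exp (c / 2 * r) * exp (c / 2 * r) := by gcongr
    _ = 8 / c ^ 2 * exp (c * r) := by rw [mul_assoc, ← exp_add]; ring_nf

theorem MeasureTheory.setLIntegral_ofReal_le_ofReal_setIntegral {α : Type*} [MeasurableSpace α]
    {μ : Measure α} {s : Set α} {f g : α → ℝ} (hs : MeasurableSet s) (hg : IntegrableOn g s μ)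
    (hg_nonneg : ∀ x ∈ s, 0 ≤ g x) (hfg : ∀ x ∈ s, f x ≤ g x) :
    ∫⁻ x in s, ENNReal.ofReal (f x) ∂μ ≤ ENNReal.ofReal (∫ x in s, g x ∂μ) :=
  calc ∫⁻ x in s, ENNReal.ofReal (f x) ∂μ ≤ ∫⁻ x in s, ENNReal.ofReal (g x) ∂μ :=
        setLIntegral_mono' hs fun x hx => ENNReal.ofReal_le_ofReal (hfg x hx)
    _ = ENNReal.ofReal (∫ x in s, g x ∂μ) :=
        (ofReal_integral_eq_lintegral_ofReal hg (ae_restrict_of_forall_mem hs hg_nonneg)).symm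

theorem MeasureTheory.lintegral_ofReal_exp_sub_one_sub_le {E : Type*} [SeminormedAddCommGroup E]
    [MeasurableSpace E] [OpensMeasurableSpace E] {ν : Measure E} {f : E → ℝ} {κ c : ℝ}
    (hc : 0 < c) (hκc : 2 * κ ≤ c) (hf : ∀ z, |f z| ≤ κ * ‖z‖)
    (h2 : IntegrableOn (fun z => ‖z‖ ^ 2) (Metric.ball 0 1) ν)
    (hexp : IntegrableOn (fun z => exp (c * ‖z‖)) {z | 1 ≤ ‖z‖} ν) :
    ∫⁻ z, ENNReal.ofReal (exp (f z) - 1 - f z) ∂ν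
      ≤ ENNReal.ofReal (κ ^ 2 *
          (1 / 2 * exp (c / 2) * (∫ z in Metric.ball 0 1, ‖z‖ ^ 2 ∂ν)
            + 4 / c ^ 2 * (∫ z in {z | 1 ≤ ‖z‖}, exp (c * ‖z‖) ∂ν))) := by
  have hball : MeasurableSet (Metric.ball (0 : E) 1) := Metric.isOpen_ball.measurableSet
  have hcompl : (Metric.ball (0 : E) 1)ᶜ = {z | 1 ≤ ‖z‖} := by ext; simp
  have hbound : ∀ z, exp (f z) - 1 - f z ≤ (κ * ‖z‖) ^ 2 / 2 * exp (κ * ‖z‖) :=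
    fun z => exp_sub_one_sub_le_of_abs_le (hf z)
  have hnear : ∀ z ∈ Metric.ball (0 : E) 1,
      exp (f z) - 1 - f z ≤ κ ^ 2 * (1 / 2 * exp (c / 2)) * ‖z‖ ^ 2 := by
    intro z hz
    have hz1 : ‖z‖ < 1 := mem_ball_zero_iff.1 hz
    have hexp_le : exp (κ * ‖z‖) ≤ exp (c / 2) := by
      gcongr; nlinarith [norm_nonneg z]
    calc exp (f z) - 1 - f z ≤ (κ * ‖z‖) ^ 2 / 2 * exp (κ * ‖z‖) := hbound z
      _ ≤ (κ * ‖z‖) ^ 2 / 2 * exp (c / 2) := by gcongr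
      _ = κ ^ 2 * (1 / 2 * exp (c / 2)) * ‖z‖ ^ 2 := by ring
  have hfar : ∀ z ∈ {z : E | 1 ≤ ‖z‖},
      exp (f z) - 1 - f z ≤ κ ^ 2 * (4 / c ^ 2) * exp (c * ‖z‖) := by
    intro z _
    have hexp_le : exp (κ * ‖z‖) ≤ exp (c / 2 * ‖z‖) := by
      gcongr; linarith
    calc exp (f z) - 1 - f z ≤ (κ * ‖z‖) ^ 2 / 2 * exp (κ * ‖z‖) := hbound z
      _ ≤ (κ * ‖z‖) ^ 2 / 2 * exp (c / 2 * ‖z‖) := by gcongr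
      _ = κ ^ 2 / 2 * (‖z‖ ^ 2 * exp (c / 2 * ‖z‖)) := by ring
      _ ≤ κ ^ 2 / 2 * (8 / c ^ 2 * exp (c * ‖z‖)) := by
        gcongr κ ^ 2 / 2 * ?_; exact sq_mul_exp_half_mul_le hc (norm_nonneg z)
      _ = κ ^ 2 * (4 / c ^ 2) * exp (c * ‖z‖) := by ring
  have hnear_int := setLIntegral_ofReal_le_ofReal_setIntegral hball (h2.const_mul _)
    (fun z _ => by positivity) hnear
  have hfar_int := setLIntegral_ofReal_le_ofReal_setIntegral (hcompl ▸ hball.compl)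
    (hexp.const_mul _) (fun z _ => by positivity) hfar
  rw [integral_const_mul] at hnear_int hfar_int
  calc ∫⁻ z, ENNReal.ofReal (exp (f z) - 1 - f z) ∂ν
      = (∫⁻ z in Metric.ball 0 1, ENNReal.ofReal (exp (f z) - 1 - f z) ∂ν)
        + ∫⁻ z in {z | 1 ≤ ‖z‖}, ENNReal.ofReal (exp (f z) - 1 - f z) ∂ν := by
        rw [← hcompl, lintegral_add_compl _ hball]
    _ ≤ _ := _root_.add_le_add hnear_int hfar_int
    _ = _ := by rw [← ENNReal.ofReal_add (by positivity) (by positivity)]; congr 1; ring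

theorem compensator_bound_exponential_moment_general
    {d : ℕ}
    (ν : Measure (EuclideanSpace ℝ (Fin d)))
    (cν cγ : ℝ) (hcν : 0 < cν)
    (h2 : IntegrableOn (fun z => ‖z‖ ^ 2) (Metric.ball (0 : EuclideanSpace ℝ (Fin d)) 1) ν)
    (hexp : IntegrableOn (fun z => Real.exp (cν * ‖z‖))
      {z : EuclideanSpace ℝ (Fin d) | 1 ≤ ‖z‖} ν)
    (a : ℝ)
    (w : EuclideanSpace ℝ (Fin d)) (hw : ‖w‖ ≤ cγ)
    (y : ℝ) (hy : 0 < y) (hy2 : 2 * y * |a| * cγ ≤ cν) :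
    ∫⁻ z, ENNReal.ofReal
        (Real.exp (y * a * (inner ℝ w z : ℝ)) - 1 - y * a * (inner ℝ w z : ℝ)) ∂ν
      ≤ ENNReal.ofReal
        (cγ ^ 2 *
            ((1 / 2) * Real.exp (cν / 2) *
                (∫ z in Metric.ball (0 : EuclideanSpace ℝ (Fin d)) 1, ‖z‖ ^ 2 ∂ν)
              + 4 / cν ^ 2 *
                (∫ z in {z : EuclideanSpace ℝ (Fin d) | 1 ≤ ‖z‖}, Real.exp (cν * ‖z‖) ∂ν))
          * y ^ 2 * a ^ 2) := by
  have hlinear : ∀ z, |y * a * inner ℝ w z| ≤ y * |a| * cγ * ‖z‖ := fun z =>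
    calc |y * a * inner ℝ w z| = y * |a| * |inner ℝ w z| := by rw [abs_mul, abs_mul, abs_of_pos hy]
      _ ≤ y * |a| * (cγ * ‖z‖) := by
        gcongr; exact (abs_real_inner_le_norm w z).trans (by gcongr)
      _ = y * |a| * cγ * ‖z‖ := by ring
  convert lintegral_ofReal_exp_sub_one_sub_le hcν (by linarith) hlinear h2 hexp using 2
  rw [mul_pow, mul_pow, sq_abs]
  ring

/-- Pointwise compensator bound under an exponential moment assumption on the Lévy measure. -/
theorem compensator_bound_exponential_moment
    {d : ℕ} (hd : 1 ≤ d)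
    (ν : Measure (EuclideanSpace ℝ (Fin d))) [SigmaFinite ν]
    (cν cγ M : ℝ) (hcν : 0 < cν) (hcγ : 0 < cγ) (hM : 0 < M)
    (h2 : IntegrableOn (fun z => ‖z‖ ^ 2) (Metric.ball (0 : EuclideanSpace ℝ (Fin d)) 1) ν)
    (hexp : IntegrableOn (fun z => Real.exp (cν * ‖z‖))
      {z : EuclideanSpace ℝ (Fin d) | 1 ≤ ‖z‖} ν)
    (a : ℝ) (ha : |a| ≤ M)
    (w : EuclideanSpace ℝ (Fin d)) (hw : ‖w‖ ≤ cγ)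
    (y : ℝ) (hy : 0 < y) (hy2 : 2 * y * |a| * cγ ≤ cν) :
    ∫⁻ z, ENNReal.ofReal
        (Real.exp (y * a * (inner ℝ w z : ℝ)) - 1 - y * a * (inner ℝ w z : ℝ)) ∂ν
      ≤ ENNReal.ofReal
        (cγ ^ 2 *
            ((1 / 2) * Real.exp (cν / 2) *
                (∫ z in Metric.ball (0 : EuclideanSpace ℝ (Fin d)) 1, ‖z‖ ^ 2 ∂ν)
              + 4 / cν ^ 2 *
                (∫ z in {z : EuclideanSpace ℝ (Fin d) | 1 ≤ ‖z‖}, Real.exp (cν * ‖z‖) ∂ν))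
          * y ^ 2 * a ^ 2) :=
  compensator_bound_exponential_moment_general ν cν cγ hcν h2 hexp a w hw y hy hy2
end

section
/- Let Z be a real random variable on a probability space (Ω, F, P) and let A, B ≥ 0. Suppose that for every u > 0, P(|Z| > A u + B √u) ≤ 2 exp(−u). Then for every p ∈ [1, ∞), E[|Z|^p]^{1/p} ≤ 2 p e^{1/(2e)} e^{−1} (√(8π) e^{1/(12p)})^{1/p} · A + 2 √p e^{1/(2e)} e^{−1/2} (√(2π) e^{1/(6p)})^{1/p} · B. -/
/-!
For `A, B > 0` the variable `V = min (|Z| / (2A), (|Z| / (2B))²)` has the tails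
`P(V > u) ≤ 2e⁻ᵘ` and dominates `|Z| ≤ 2AV + 2B√V`. The layer-cake formula bounds the moments
`E[V^q] ≤ 2Γ(q + 1)`, so Minkowski's inequality gives
`‖Z‖ₚ ≤ 2A (2Γ(p + 1))^{1/p} + 2B (2Γ(p/2 + 1))^{1/p}`; degenerate `A` or `B` follow by letting
`ε → 0` in `A + ε, B + ε`. The explicit constants come from Robbins' form of Stirling's bound
`Γ(x + 1) ≤ √(2πx) (x/e)ˣ e^{1/(12x)}`, together with `√p ≤ e^{p/(2e)}`. For real `x > 0` the
Stirling bound follows by telescoping Robbins' stepwise estimate, read off the series of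
`log (1 + 1/x)`, and comparing with integers through the log-convexity of `Γ`.
-/

open Real Filter MeasureTheory Topology
open scoped ENNReal

lemma mul_log_one_add_inv_sub_one_le {x : ℝ} (hx : 0 < x) :
    (x + 1 / 2) * log (1 + x⁻¹) - 1 ≤ 1 / (12 * x) - 1 / (12 * (x + 1)) := by
  set r := (1 / (2 * x + 1)) ^ 2 with hr
  have hr0 : 0 ≤ r := by positivity
  have hr1 : 1 - r = 4 * x * (x + 1) / (2 * x + 1) ^ 2 := by rw [hr]; field_simp; ring
  have hseries : HasSum (fun k : ℕ => r ^ k / (2 * k + 1)) ((x + 1 / 2) * log (1 + x⁻¹)) := by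
    refine ((hasSum_log_one_add_inv hx).mul_left (x + 1 / 2)).congr_fun fun k => ?_
    rw [hr, ← pow_mul, pow_succ]
    field_simp
  have htail : HasSum (fun k : ℕ => r ^ (k + 1) / (2 * (k + 1 : ℕ) + 1))
      ((x + 1 / 2) * log (1 + x⁻¹) - 1) := by
    simpa using (hasSum_nat_add_iff' 1).2 hseries
  -- Robbins' trick: bound every `1 / (2k + 3)` by `1 / 3` and sum the geometric series.
  have hgeom : HasSum (fun k : ℕ => r ^ (k + 1) / 3) (1 / (12 * x) - 1 / (12 * (x + 1))) := by
    have hr_lt : r < 1 := sub_pos.1 (hr1 ▸ by positivity)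
    have h := ((hasSum_geometric_of_lt_one hr0 hr_lt).mul_left r).div_const 3
    rw [show r * (1 - r)⁻¹ / 3 = 1 / (12 * x) - 1 / (12 * (x + 1)) by
      rw [hr1, hr]; field_simp; ring] at h
    exact h.congr_fun fun k => by ring
  refine hasSum_le (fun k => ?_) htail hgeom
  gcongr
  push_cast
  linarith [(k.cast_nonneg : (0 : ℝ) ≤ k)]

noncomputable def stirlingRemainder (x : ℝ) : ℝ :=
  log (Gamma x) - (x - 1 / 2) * log x + x - log (2 * π) / 2

lemma stirlingRemainder_sub_add_one {x : ℝ} (hx : 0 < x) :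
    stirlingRemainder x - stirlingRemainder (x + 1) = (x + 1 / 2) * log (1 + x⁻¹) - 1 := by
  have h1x : 1 + x⁻¹ = (x + 1) / x := by field_simp
  rw [stirlingRemainder, stirlingRemainder, Gamma_add_one hx.ne',
    log_mul hx.ne' (Gamma_pos_of_pos hx).ne', h1x, log_div (by positivity) hx.ne']
  ring

lemma stirlingRemainder_sub_le_add_nat {x : ℝ} (hx : 0 < x) (N : ℕ) :
    stirlingRemainder x - 1 / (12 * x) ≤ stirlingRemainder (x + N) - 1 / (12 * (x + N)) := by
  induction N with
  | zero => simp
  | succ N ih =>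
    have hxN : 0 < x + N := by positivity
    have := stirlingRemainder_sub_add_one hxN
    have := mul_log_one_add_inv_sub_one_le hxN
    push_cast
    rw [← add_assoc]
    linarith

lemma stirlingRemainder_natCast {n : ℕ} (hn : n ≠ 0) :
    stirlingRemainder n = log (Stirling.stirlingSeq n) - log √π := by
  obtain ⟨m, rfl⟩ := Nat.exists_eq_succ_of_ne_zero hn
  have hm : (0 : ℝ) < m + 1 := by positivity
  rw [stirlingRemainder, Stirling.log_stirlingSeq_formula, Nat.cast_succ, Gamma_nat_eq_factorial,
    Nat.factorial_succ, Nat.cast_mul, Nat.cast_succ, log_mul hm.ne' (by positivity),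
    log_mul two_ne_zero hm.ne', log_div hm.ne' (exp_pos 1).ne', log_exp,
    log_mul two_ne_zero pi_ne_zero, log_sqrt pi_pos.le]
  ring

lemma tendsto_stirlingRemainder_natCast :
    Tendsto (fun n : ℕ => stirlingRemainder n) atTop (𝓝 0) := by
  have h := (Stirling.tendsto_stirlingSeq_sqrt_pi.log (by positivity)).sub_const (log √π)
  rw [sub_self] at h
  refine h.congr' ?_
  filter_upwards [eventually_ne_atTop 0] with n hn
  exact (stirlingRemainder_natCast hn).symm

lemma stirlingRemainder_nat_add_le {n : ℕ} (hn : n ≠ 0) {s : ℝ} (hs0 : 0 < s) (hs1 : s ≤ 1) :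
    stirlingRemainder (n + s) ≤ stirlingRemainder n + 1 / (2 * n) := by
  have hn0 : (0 : ℝ) < n := by positivity
  have hconv : log (Gamma (n + s)) ≤ log (Gamma n) + s * log n :=
    BohrMollerup.f_add_nat_le convexOn_log_Gamma (fun {y} hy => by
      rw [Function.comp_apply, Function.comp_apply, Gamma_add_one hy.ne',
        log_mul hy.ne' (Gamma_pos_of_pos hy).ne', add_comm]) hn hs0 hs1
  have hlog : s / (n + s) ≤ log (n + s) - log n := by
    have := one_sub_inv_le_log_of_pos (show 0 < (n + s) / n by positivity)
    rw [log_div (by positivity) hn0.ne', inv_div] at this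
    calc s / (n + s) = 1 - n / (n + s) := by field_simp; ring
      _ ≤ _ := this
  have hmul : s - s / (2 * (n + s)) ≤ (n + s - 1 / 2) * (log (n + s) - log n) := by
    calc s - s / (2 * (n + s)) = (n + s - 1 / 2) * (s / (n + s)) := by field_simp
      _ ≤ _ := by
        gcongr
        linarith [(by exact_mod_cast Nat.one_le_iff_ne_zero.2 hn : (1 : ℝ) ≤ n)]
  have hsmall : s / (2 * (n + s)) ≤ 1 / (2 * n) := by
    gcongr; linarith
  rw [stirlingRemainder, stirlingRemainder]
  linarith

lemma stirlingRemainder_le {x : ℝ} (hx : 0 < x) : stirlingRemainder x ≤ 1 / (12 * x) := by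
  set m := ⌈x⌉₊
  set s := x + 1 - m
  have hs0 : 0 < s := by linarith [Nat.ceil_lt_add_one hx.le]
  have hs1 : s ≤ 1 := by linarith [Nat.le_ceil x]
  have hbound : ∀ N : ℕ, stirlingRemainder x - 1 / (12 * x) ≤
      stirlingRemainder (N + m : ℕ) + 1 / (2 * (N + m : ℕ)) := fun N => by
    have hNm : N + m ≠ 0 := by positivity
    have hshift : x + (N + 1 : ℕ) = (N + m : ℕ) + s := by push_cast; ring
    have := stirlingRemainder_sub_le_add_nat hx (N + 1)
    rw [hshift] at this
    have : 0 < 1 / (12 * (((N + m : ℕ) : ℝ) + s)) := by positivity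
    linarith [stirlingRemainder_nat_add_le hNm hs0 hs1]
  have hlim : Tendsto (fun n : ℕ => stirlingRemainder n + 1 / (2 * n)) atTop (𝓝 0) := by
    simpa using tendsto_stirlingRemainder_natCast.add
      ((tendsto_const_div_atTop_nhds_zero_nat (1 / 2)).congr fun n => by ring)
  linarith [ge_of_tendsto' (hlim.comp (tendsto_add_atTop_nat m)) hbound]

lemma log_Gamma_add_one_le {x : ℝ} (hx : 0 < x) :
    log (Gamma (x + 1)) ≤ (x + 1 / 2) * log x - x + log (2 * π) / 2 + 1 / (12 * x) := by
  have := stirlingRemainder_le hx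
  rw [stirlingRemainder] at this
  rw [Gamma_add_one hx.ne', log_mul hx.ne' (Gamma_pos_of_pos hx).ne']
  linarith

lemma log_le_div_exp_one {x : ℝ} (hx : 0 < x) : log x ≤ x / exp 1 := by
  have := log_le_sub_one_of_pos (show 0 < x / exp 1 by positivity)
  rw [log_div hx.ne' (exp_pos 1).ne', log_exp] at this
  linarith

lemma two_mul_Gamma_add_one_rpow_le {p : ℝ} (hp : 0 < p) :
    (2 * Gamma (p + 1)) ^ (1 / p) ≤ p * exp (1 / (2 * exp 1)) * exp (-1) *
      (√(8 * π) * exp (1 / (12 * p))) ^ (1 / p) := by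
  have hΓ := Gamma_pos_of_pos (show 0 < p + 1 by linarith)
  have hStirling := log_Gamma_add_one_le hp
  rw [log_mul two_ne_zero pi_ne_zero] at hStirling
  have hlog := log_le_div_exp_one hp
  have h8 : log 8 = 3 * log 2 := by
    rw [show (8 : ℝ) = 2 ^ 3 by norm_num, log_pow]; norm_num
  have key : log 2 + log (Gamma (p + 1)) ≤
      p * (log p + 1 / (2 * exp 1) - 1) + ((log 8 + log π) / 2 + 1 / (12 * p)) := by
    have : p * (1 / (2 * exp 1)) = p / exp 1 / 2 := by ring
    linarith
  rw [← log_le_log_iff (by positivity) (by positivity)]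
  simp (disch := positivity) only [log_mul, log_rpow, log_exp, log_sqrt]
  calc 1 / p * (log 2 + log (Gamma (p + 1)))
      ≤ 1 / p * (p * (log p + 1 / (2 * exp 1) - 1) + ((log 8 + log π) / 2 + 1 / (12 * p))) :=
        mul_le_mul_of_nonneg_left key (by positivity)
    _ = _ := by field_simp; ring

lemma two_mul_Gamma_half_add_one_rpow_le {p : ℝ} (hp : 1 ≤ p) :
    (2 * Gamma (p / 2 + 1)) ^ (1 / p) ≤ √p * exp (1 / (2 * exp 1)) * exp (-1 / 2) *
      (√(2 * π) * exp (1 / (6 * p))) ^ (1 / p) := by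
  have hp0 : 0 < p := by linarith
  have hΓ := Gamma_pos_of_pos (show 0 < p / 2 + 1 by linarith)
  have hStirling := log_Gamma_add_one_le (half_pos hp0)
  rw [log_div hp0.ne' two_ne_zero, log_mul two_ne_zero pi_ne_zero,
    show 1 / (12 * (p / 2)) = 1 / (6 * p) by ring] at hStirling
  have hlog := log_le_div_exp_one hp0
  have hlog2 := mul_nonneg (sub_nonneg.2 hp) (log_nonneg one_le_two)
  have key : log 2 + log (Gamma (p / 2 + 1)) ≤
      p * (log p / 2 + 1 / (2 * exp 1) + -1 / 2) + ((log 2 + log π) / 2 + 1 / (6 * p)) := by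
    have : p * (1 / (2 * exp 1)) = p / exp 1 / 2 := by ring
    linarith
  rw [← log_le_log_iff (by positivity) (by positivity)]
  simp (disch := positivity) only [log_mul, log_rpow, log_exp, log_sqrt]
  calc 1 / p * (log 2 + log (Gamma (p / 2 + 1)))
      ≤ 1 / p * (p * (log p / 2 + 1 / (2 * exp 1) + -1 / 2) +
          ((log 2 + log π) / 2 + 1 / (6 * p))) :=
        mul_le_mul_of_nonneg_left key (by positivity)
    _ = _ := by field_simp

section Moments

variable {Ω : Type*} [MeasurableSpace Ω] {μ : Measure Ω}

lemma eLpNorm_ofReal_eq_lintegral_abs_rpow {f : Ω → ℝ} {p : ℝ} (hp : 0 < p) :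
    eLpNorm f (ENNReal.ofReal p) μ = (∫⁻ ω, ENNReal.ofReal (|f ω| ^ p) ∂μ) ^ (1 / p) := by
  rw [eLpNorm_eq_lintegral_rpow_enorm_toReal (by simpa using hp) ENNReal.ofReal_ne_top,
    ENNReal.toReal_ofReal hp.le]
  simp_rw [Real.enorm_eq_ofReal_abs, ENNReal.ofReal_rpow_of_nonneg (abs_nonneg _) hp.le]

lemma lintegral_rpow_le_of_tail {W : Ω → ℝ} (hW : AEMeasurable W μ) (hW0 : 0 ≤ᵐ[μ] W)
    (htail : ∀ u > 0, μ {ω | u < W ω} ≤ ENNReal.ofReal (2 * exp (-u))) {q : ℝ} (hq : 0 < q) :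
    ∫⁻ ω, ENNReal.ofReal (W ω ^ q) ∂μ ≤ ENNReal.ofReal (2 * Gamma (q + 1)) := by
  rw [lintegral_rpow_eq_lintegral_meas_lt_mul μ hW0 hW hq]
  have hbound : ∫⁻ t in Set.Ioi 0, μ {ω | t < W ω} * ENNReal.ofReal (t ^ (q - 1))
      ≤ ∫⁻ t in Set.Ioi 0, ENNReal.ofReal (2 * (exp (-t) * t ^ (q - 1))) := by
    refine setLIntegral_mono (by fun_prop) fun t ht => ?_
    grw [htail t ht, ← ENNReal.ofReal_mul (by positivity), mul_assoc]
  have hGamma : ∫⁻ t in Set.Ioi 0, ENNReal.ofReal (2 * (exp (-t) * t ^ (q - 1)))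
      = ENNReal.ofReal (2 * Gamma q) := by
    rw [← ofReal_integral_eq_lintegral_ofReal ((GammaIntegral_convergent hq).const_mul 2),
      integral_const_mul, Gamma_eq_integral hq]
    filter_upwards [self_mem_ae_restrict measurableSet_Ioi] with t (ht : 0 < t)
    positivity
  grw [hbound, hGamma, ← ENNReal.ofReal_mul hq.le, Gamma_add_one hq.ne']
  rw [mul_left_comm]

lemma eLpNorm_le_of_tail {W : Ω → ℝ} (hW : AEMeasurable W μ) (hW0 : 0 ≤ᵐ[μ] W)
    (htail : ∀ u > 0, μ {ω | u < W ω} ≤ ENNReal.ofReal (2 * exp (-u))) {p : ℝ} (hp : 0 < p) :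
    eLpNorm W (ENNReal.ofReal p) μ ≤ ENNReal.ofReal ((2 * Gamma (p + 1)) ^ (1 / p)) := by
  have habs : (fun ω => ENNReal.ofReal (|W ω| ^ p)) =ᵐ[μ] fun ω => ENNReal.ofReal (W ω ^ p) := by
    filter_upwards [hW0] with ω hω
    rw [abs_of_nonneg hω]
  have hΓ := Gamma_pos_of_pos (show 0 < p + 1 by linarith)
  rw [eLpNorm_ofReal_eq_lintegral_abs_rpow hp, lintegral_congr_ae habs,
    ← ENNReal.ofReal_rpow_of_nonneg (by positivity) (by positivity)]
  gcongr
  exact lintegral_rpow_le_of_tail hW hW0 htail hp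

lemma eLpNorm_sqrt_le_of_tail {W : Ω → ℝ} (hW : AEMeasurable W μ) (hW0 : 0 ≤ᵐ[μ] W)
    (htail : ∀ u > 0, μ {ω | u < W ω} ≤ ENNReal.ofReal (2 * exp (-u))) {p : ℝ} (hp : 0 < p) :
    eLpNorm (fun ω => √(W ω)) (ENNReal.ofReal p) μ ≤
      ENNReal.ofReal ((2 * Gamma (p / 2 + 1)) ^ (1 / p)) := by
  have hsqrt : (fun ω => ENNReal.ofReal (|√(W ω)| ^ p)) =ᵐ[μ]
      fun ω => ENNReal.ofReal (W ω ^ (p / 2)) := by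
    filter_upwards [hW0] with ω hω
    rw [abs_of_nonneg (sqrt_nonneg _), sqrt_eq_rpow, ← rpow_mul hω, one_div_mul_eq_div]
  have hΓ := Gamma_pos_of_pos (show 0 < p / 2 + 1 by linarith)
  rw [eLpNorm_ofReal_eq_lintegral_abs_rpow hp, lintegral_congr_ae hsqrt,
    ← ENNReal.ofReal_rpow_of_nonneg (by positivity) (by positivity)]
  gcongr
  exact lintegral_rpow_le_of_tail hW hW0 htail (half_pos hp)

lemma exists_dominating_of_mixed_tail {Z : Ω → ℝ} (hZ : Measurable Z) {A B : ℝ} (hA : 0 < A)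
    (hB : 0 < B)
    (h : ∀ u > (0 : ℝ), μ {ω | |Z ω| > A * u + B * √u} ≤ ENNReal.ofReal (2 * exp (-u))) :
    ∃ V : Ω → ℝ, Measurable V ∧ (∀ ω, 0 ≤ V ω) ∧
      (∀ u > 0, μ {ω | u < V ω} ≤ ENNReal.ofReal (2 * exp (-u))) ∧
      ∀ ω, |Z ω| ≤ 2 * A * V ω + 2 * B * √(V ω) := by
  refine ⟨fun ω => min (|Z ω| / (2 * A)) ((|Z ω| / (2 * B)) ^ 2), by fun_prop,
    fun ω => by positivity, fun u hu => (measure_mono fun ω (hω : u < min _ _) => ?_).trans (h u hu),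
    fun ω => ?_⟩
  · obtain ⟨hlin, hsq⟩ := lt_min_iff.1 hω
    have hsqrt : √u < |Z ω| / (2 * B) :=
      (sqrt_lt_sqrt hu.le hsq).trans_eq (sqrt_sq (by positivity))
    rw [lt_div_iff₀ (by positivity)] at hlin hsqrt
    change A * u + B * √u < |Z ω|
    linarith
  · dsimp only
    rcases min_cases (|Z ω| / (2 * A)) ((|Z ω| / (2 * B)) ^ 2) with ⟨hmin, -⟩ | ⟨hmin, -⟩ <;>
      rw [hmin]
    · have : 2 * A * (|Z ω| / (2 * A)) = |Z ω| := by field_simp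
      have : 0 ≤ 2 * B * √(|Z ω| / (2 * A)) := by positivity
      linarith
    · have : 2 * B * √((|Z ω| / (2 * B)) ^ 2) = |Z ω| := by
        rw [sqrt_sq (by positivity)]; field_simp
      have : 0 ≤ 2 * A * (|Z ω| / (2 * B)) ^ 2 := by positivity
      linarith

lemma eLpNorm_le_of_mixed_tail_of_pos {Z : Ω → ℝ} (hZ : Measurable Z) {A B : ℝ} (hA : 0 < A)
    (hB : 0 < B)
    (h : ∀ u > (0 : ℝ), μ {ω | |Z ω| > A * u + B * √u} ≤ ENNReal.ofReal (2 * exp (-u)))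
    {p : ℝ} (hp : 1 ≤ p) :
    eLpNorm Z (ENNReal.ofReal p) μ ≤ ENNReal.ofReal
      (2 * A * (2 * Gamma (p + 1)) ^ (1 / p) + 2 * B * (2 * Gamma (p / 2 + 1)) ^ (1 / p)) := by
  obtain ⟨V, hV, hV0, htail, hZV⟩ := exists_dominating_of_mixed_tail hZ hA hB h
  have hp0 : 0 < p := by linarith
  have hV0' : 0 ≤ᵐ[μ] V := .of_forall hV0
  calc eLpNorm Z (ENNReal.ofReal p) μ
      ≤ eLpNorm ((2 * A) • V + (2 * B) • fun ω => √(V ω)) (ENNReal.ofReal p) μ :=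
        eLpNorm_mono_real fun ω => hZV ω
    _ ≤ eLpNorm ((2 * A) • V) (ENNReal.ofReal p) μ +
          eLpNorm ((2 * B) • fun ω => √(V ω)) (ENNReal.ofReal p) μ :=
        eLpNorm_add_le (by fun_prop) (by fun_prop) (by simpa using hp)
    _ ≤ ENNReal.ofReal (2 * A) * ENNReal.ofReal ((2 * Gamma (p + 1)) ^ (1 / p)) +
          ENNReal.ofReal (2 * B) * ENNReal.ofReal ((2 * Gamma (p / 2 + 1)) ^ (1 / p)) := by
      rw [eLpNorm_const_smul, eLpNorm_const_smul, Real.enorm_of_nonneg (by positivity),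
        Real.enorm_of_nonneg (by positivity)]
      gcongr
      · exact eLpNorm_le_of_tail hV.aemeasurable hV0' htail hp0
      · exact eLpNorm_sqrt_le_of_tail hV.aemeasurable hV0' htail hp0
    _ = _ := by
      rw [← ENNReal.ofReal_mul (by positivity), ← ENNReal.ofReal_mul (by positivity),
        ← ENNReal.ofReal_add (by positivity) (by positivity)]

lemma eLpNorm_le_of_mixed_tail {Z : Ω → ℝ} (hZ : Measurable Z) {A B : ℝ} (hA : 0 ≤ A)
    (hB : 0 ≤ B)
    (h : ∀ u > (0 : ℝ), μ {ω | |Z ω| > A * u + B * √u} ≤ ENNReal.ofReal (2 * exp (-u)))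
    {p : ℝ} (hp : 1 ≤ p) :
    eLpNorm Z (ENNReal.ofReal p) μ ≤ ENNReal.ofReal
      (2 * A * (2 * Gamma (p + 1)) ^ (1 / p) + 2 * B * (2 * Gamma (p / 2 + 1)) ^ (1 / p)) := by
  set f : ℝ → ℝ := fun ε => 2 * (A + ε) * (2 * Gamma (p + 1)) ^ (1 / p) +
    2 * (B + ε) * (2 * Gamma (p / 2 + 1)) ^ (1 / p)
  have hf : Tendsto (fun ε => ENNReal.ofReal (f ε)) (𝓝[>] 0) (𝓝 (ENNReal.ofReal (f 0))) :=
    ((ENNReal.continuous_ofReal.comp (by fun_prop)).tendsto 0).mono_left nhdsWithin_le_nhds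
  have hε : ∀ ε > 0, eLpNorm Z (ENNReal.ofReal p) μ ≤ ENNReal.ofReal (f ε) := fun ε hε =>
    eLpNorm_le_of_mixed_tail_of_pos (A := A + ε) (B := B + ε) hZ (by linarith) (by linarith)
      (fun u hu => (measure_mono fun ω (hω : (A + ε) * u + (B + ε) * √u < |Z ω|) =>
        (by nlinarith [sqrt_nonneg u] : A * u + B * √u < |Z ω|)).trans (h u hu)) hp
  simpa [f] using ge_of_tendsto hf (eventually_nhdsWithin_of_forall hε)

end Moments

theorem moments_from_mixed_tails_general
    {Ω : Type*} [MeasurableSpace Ω] (P : Measure Ω)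
    (Z : Ω → ℝ) (hZ : Measurable Z) (A B : ℝ) (hA : 0 ≤ A) (hB : 0 ≤ B)
    (h : ∀ u > (0 : ℝ),
      P {ω | |Z ω| > A * u + B * Real.sqrt u} ≤ ENNReal.ofReal (2 * Real.exp (-u)))
    (p : ℝ) (hp : 1 ≤ p) :
    (∫⁻ ω, ENNReal.ofReal (|Z ω| ^ p) ∂P) ^ (1 / p) ≤
      ENNReal.ofReal
        (2 * p * Real.exp (1 / (2 * Real.exp 1)) * Real.exp (-1) *
            (Real.sqrt (8 * Real.pi) * Real.exp (1 / (12 * p))) ^ (1 / p) * A +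
          2 * Real.sqrt p * Real.exp (1 / (2 * Real.exp 1)) * Real.exp (-(1 : ℝ) / 2) *
            (Real.sqrt (2 * Real.pi) * Real.exp (1 / (6 * p))) ^ (1 / p) * B) := by
  have hp0 : 0 < p := by linarith
  rw [← eLpNorm_ofReal_eq_lintegral_abs_rpow hp0]
  refine (eLpNorm_le_of_mixed_tail hZ hA hB h hp).trans (ENNReal.ofReal_le_ofReal ?_)
  have hA' := mul_le_mul_of_nonneg_left (two_mul_Gamma_add_one_rpow_le hp0) hA
  have hB' := mul_le_mul_of_nonneg_left (two_mul_Gamma_half_add_one_rpow_le hp) hB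
  linarith

/-- Moment bound from mixed subgaussian–subexponential tails
(slight adjustment of Lemma A.2 of Dirksen). -/
theorem moments_from_mixed_tails
    {Ω : Type*} [MeasurableSpace Ω] (P : Measure Ω) [IsProbabilityMeasure P]
    (Z : Ω → ℝ) (hZ : Measurable Z) (A B : ℝ) (hA : 0 ≤ A) (hB : 0 ≤ B)
    (h : ∀ u > (0 : ℝ),
      P {ω | |Z ω| > A * u + B * Real.sqrt u} ≤ ENNReal.ofReal (2 * Real.exp (-u)))
    (p : ℝ) (hp : 1 ≤ p) :
    (∫⁻ ω, ENNReal.ofReal (|Z ω| ^ p) ∂P) ^ (1 / p) ≤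
      ENNReal.ofReal
        (2 * p * Real.exp (1 / (2 * Real.exp 1)) * Real.exp (-1) *
            (Real.sqrt (8 * Real.pi) * Real.exp (1 / (12 * p))) ^ (1 / p) * A +
          2 * Real.sqrt p * Real.exp (1 / (2 * Real.exp 1)) * Real.exp (-(1 : ℝ) / 2) *
            (Real.sqrt (2 * Real.pi) * Real.exp (1 / (6 * p))) ^ (1 / p) * B) :=
  moments_from_mixed_tails_general P Z hZ A B hA hB h p hp
end

section
/- Let d ≥ 1, let D ⊆ ℝ^d be a nonempty bounded set with diameter diam(D), let k : ℝ → ℝ be Lipschitz with constant L > 0 and |k(t)| ≤ K_∞ for all t, with K_∞ > 0, let b : ℝ^d → ℝ be bounded with sup_y |b(y)| ≤ M_b, M_b > 0, and let h = (h₁,…,h_d) ∈ (0,∞)^d. Then for every u > 0 there exists a finite set F of functions from ℝ^d to ℝ with card(F) ≤ ∏_{i=1}^d ( ⌈ L · M_b · K_∞^{d−1} · d · diam(D) / (u h_i) ⌉ + 1 ) such that for every x ∈ D there is f ∈ F with sup_{y ∈ ℝ^d} | b(y)·∏_{i=1}^d k((x_i − y_i)/h_i) − f(y) | ≤ u. 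-/
/-!
Changing each coordinate `x i` by at most `δ * h i` moves every factor `k ((x i - y i) / h i)` by at
most `L * δ`; telescoping the product of `d` factors bounded by `K∞` then moves it by at most
`K∞ ^ (d - 1) * d * L * δ`, uniformly in `y`. With `δ = u / (L * Mb * K∞ ^ (d - 1) * d)` every
`x ∈ D` is therefore `u`-approximated by a point of the grid `m i + j i * δ * h i`, where `m i` is
the infimum of the `i`-th coordinate over `D`. Since these coordinates range over an interval of
length at most `diam D`, the indices `j i ≤ ⌈diam D / (δ * h i)⌉` suffice.
-/

open Finset Metric

lemma abs_prod_sub_prod_le {ι : Type*} {s : Finset ι} {a c : ι → ℝ} {K : ℝ}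
    (ha : ∀ i, |a i| ≤ K) (hc : ∀ i, |c i| ≤ K) :
    |∏ i ∈ s, a i - ∏ i ∈ s, c i| ≤ K ^ (#s - 1) * ∑ i ∈ s, |a i - c i| := by
  classical
  rcases s.eq_empty_or_nonempty with rfl | hs
  · simp
  induction hs using Finset.Nonempty.cons_induction with
  | singleton j => simp
  | cons j s hj hs ih =>
    have hK : 0 ≤ K := (abs_nonneg _).trans (hc j)
    have hprod_c : |∏ i ∈ s, c i| ≤ K ^ #s := by
      simpa only [abs_prod, prod_const] using prod_le_prod (fun i _ ↦ abs_nonneg _) fun i _ ↦ hc i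
    have hexp : K ^ #s = K * K ^ (#s - 1) := by
      rw [← pow_succ', Nat.sub_add_cancel hs.card_pos]
    rw [prod_cons, prod_cons, sum_cons, card_cons, Nat.add_sub_cancel]
    calc |a j * ∏ i ∈ s, a i - c j * ∏ i ∈ s, c i|
        = |a j * (∏ i ∈ s, a i - ∏ i ∈ s, c i) + (a j - c j) * ∏ i ∈ s, c i| := by
          congr 1; ring
      _ ≤ |a j| * |∏ i ∈ s, a i - ∏ i ∈ s, c i| + |a j - c j| * |∏ i ∈ s, c i| := by
        rw [← abs_mul, ← abs_mul]
        exact abs_add_le _ _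
      _ ≤ K * (K ^ (#s - 1) * ∑ i ∈ s, |a i - c i|) + |a j - c j| * K ^ #s := by
        gcongr
        exact ha j
      _ = K ^ #s * (|a j - c j| + ∑ i ∈ s, |a i - c i|) := by rw [hexp]; ring

lemma abs_prod_kernel_sub_prod_kernel_le {ι : Type*} [Fintype ι] {k : ℝ → ℝ} {L K δ : ℝ}
    (hLip : ∀ s t, |k s - k t| ≤ L * |s - t|) (hkb : ∀ t, |k t| ≤ K)
    {x z y h : ι → ℝ} (hh : ∀ i, 0 < h i) (hxz : ∀ i, |x i - z i| ≤ δ * h i) :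
    |∏ i, k ((x i - y i) / h i) - ∏ i, k ((z i - y i) / h i)|
      ≤ K ^ (Fintype.card ι - 1) * (Fintype.card ι * (L * δ)) := by
  have hL : 0 ≤ L := by simpa using (abs_nonneg _).trans (hLip 1 0)
  have hterm : ∀ i, |k ((x i - y i) / h i) - k ((z i - y i) / h i)| ≤ L * δ := fun i ↦
    calc _ ≤ L * |(x i - y i) / h i - (z i - y i) / h i| := hLip _ _
      _ = L * (|x i - z i| / h i) := by
        rw [← sub_div, sub_sub_sub_cancel_right, abs_div, abs_of_pos (hh i)]
      _ ≤ L * δ := by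
        gcongr
        exact (div_le_iff₀ (hh i)).2 (hxz i)
  calc _ ≤ K ^ (Fintype.card ι - 1) * ∑ i, |k ((x i - y i) / h i) - k ((z i - y i) / h i)| :=
        abs_prod_sub_prod_le (fun _ ↦ hkb _) (fun _ ↦ hkb _)
    _ ≤ K ^ (Fintype.card ι - 1) * (Fintype.card ι * (L * δ)) := by
      have hK : 0 ≤ K := (abs_nonneg _).trans (hkb 0)
      gcongr
      simpa using sum_le_sum fun i (_ : i ∈ univ) ↦ hterm i

lemma LipschitzWith.exists_mapsTo_Icc_diam {α : Type*} [PseudoMetricSpace α] {f : α → ℝ}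
    (hf : LipschitzWith 1 f) {s : Set α} (hs : Bornology.IsBounded s) :
    ∃ m, Set.MapsTo f s (Set.Icc m (m + diam s)) := by
  refine ⟨sInf (f '' s), fun x hx ↦
    Set.mem_Icc.2 ⟨csInf_le (hf.isBounded_image hs).bddBelow (Set.mem_image_of_mem f hx), ?_⟩⟩
  rw [← sub_le_iff_le_add]
  refine le_csInf ⟨f x, x, hx, rfl⟩ ?_
  rintro _ ⟨y, hy, rfl⟩
  have := (le_abs_self _).trans ((hf.dist_le_mul x y).trans_eq (one_mul _))
  linarith [this.trans (dist_le_diam_of_mem hs hx hy)]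

lemma PiLp.lipschitzWith_apply {p : ENNReal} [Fact (1 ≤ p)] {ι : Type*} [Fintype ι]
    {β : ι → Type*} [∀ i, PseudoMetricSpace (β i)] (i : ι) :
    LipschitzWith 1 fun x : PiLp p β ↦ x i :=
  LipschitzWith.of_dist_le_mul fun x y ↦ by simpa using PiLp.dist_apply_le x y i

lemma exists_abs_sub_grid_le {t m R ε : ℝ} (ht : t ∈ Set.Icc m (m + R)) (hε : 0 < ε) :
    ∃ j : Fin (⌈R / ε⌉₊ + 1), |t - (m + j * ε)| ≤ ε := by
  have hq : 0 ≤ (t - m) / ε := div_nonneg (by linarith [ht.1]) hε.le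
  have hj : ⌊(t - m) / ε⌋₊ < ⌈R / ε⌉₊ + 1 := Nat.lt_succ_of_le <|
    (Nat.floor_mono (by gcongr; linarith [ht.2])).trans (Nat.floor_le_ceil _)
  have hlow := Nat.floor_le hq
  have hupp := Nat.lt_floor_add_one ((t - m) / ε)
  rw [le_div_iff₀ hε] at hlow
  rw [div_lt_iff₀ hε] at hupp
  exact ⟨⟨_, hj⟩, abs_le.2 ⟨by linarith, by linarith⟩⟩

theorem covering_bound_weighted_kernel_class_general
    {d : ℕ} (hd : 1 ≤ d)
    (D : Set (EuclideanSpace ℝ (Fin d))) (hDb : Bornology.IsBounded D)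
    (k : ℝ → ℝ) (L Kinf : ℝ) (hL : 0 < L) (hK : 0 < Kinf)
    (hLip : ∀ s t, |k s - k t| ≤ L * |s - t|) (hkb : ∀ t, |k t| ≤ Kinf)
    (b : EuclideanSpace ℝ (Fin d) → ℝ) (Mb : ℝ) (hMb : 0 < Mb) (hb : ∀ y, |b y| ≤ Mb)
    (h : Fin d → ℝ) (hh : ∀ i, 0 < h i) (u : ℝ) (hu : 0 < u) :
    ∃ F : Finset (EuclideanSpace ℝ (Fin d) → ℝ),
      F.card ≤
          ∏ i : Fin d,
            (Nat.ceil (L * Mb * Kinf ^ (d - 1) * d * Metric.diam D / (u * h i)) + 1) ∧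
        ∀ x ∈ D, ∃ f ∈ F, ∀ y,
          |b y * (∏ i, k ((x i - y i) / h i)) - f y| ≤ u := by
  have hC : 0 < L * Mb * Kinf ^ (d - 1) * d := by
    have : (0 : ℝ) < d := by exact_mod_cast hd
    positivity
  classical
  set δ := u / (L * Mb * Kinf ^ (d - 1) * d)
  have hδh : ∀ i, 0 < δ * h i := fun i ↦ mul_pos (div_pos hu hC) (hh i)
  choose m hm using fun i ↦ (PiLp.lipschitzWith_apply (p := 2) i).exists_mapsTo_Icc_diam hDb
  let g : (∀ i, Fin (⌈diam D / (δ * h i)⌉₊ + 1)) → EuclideanSpace ℝ (Fin d) → ℝ :=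
    fun j y ↦ b y * ∏ i, k ((m i + j i * (δ * h i) - y i) / h i)
  refine ⟨univ.image g, card_image_le.trans_eq ?_, fun x hx ↦ ?_⟩
  · simp only [card_univ, Fintype.card_pi, Fintype.card_fin]
    refine prod_congr rfl fun i _ ↦ ?_
    congr 2
    simp only [δ]
    field_simp
  choose j hj using fun i ↦ exists_abs_sub_grid_le (hm i hx) (hδh i)
  refine ⟨g j, mem_image_of_mem _ (mem_univ _), fun y ↦ ?_⟩
  calc |b y * ∏ i, k ((x i - y i) / h i) - g j y|
      = |b y| * |∏ i, k ((x i - y i) / h i) - ∏ i, k ((m i + j i * (δ * h i) - y i) / h i)| := by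
        rw [← abs_mul, mul_sub]
    _ ≤ Mb * (Kinf ^ (d - 1) * (d * (L * δ))) := by
      gcongr
      · exact hb y
      · simpa using abs_prod_kernel_sub_prod_kernel_le hLip hkb hh hj
    _ = u := by
      simp only [δ]
      field_simp

/-- Sup-norm covering bound for the weighted kernel class `𝒢_h b`. -/
theorem covering_bound_weighted_kernel_class
    {d : ℕ} (hd : 1 ≤ d)
    (D : Set (EuclideanSpace ℝ (Fin d))) (hD : D.Nonempty) (hDb : Bornology.IsBounded D)
    (k : ℝ → ℝ) (L Kinf : ℝ) (hL : 0 < L) (hK : 0 < Kinf)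
    (hLip : ∀ s t, |k s - k t| ≤ L * |s - t|) (hkb : ∀ t, |k t| ≤ Kinf)
    (b : EuclideanSpace ℝ (Fin d) → ℝ) (Mb : ℝ) (hMb : 0 < Mb) (hb : ∀ y, |b y| ≤ Mb)
    (h : Fin d → ℝ) (hh : ∀ i, 0 < h i) (u : ℝ) (hu : 0 < u) :
    ∃ F : Finset (EuclideanSpace ℝ (Fin d) → ℝ),
      F.card ≤
          ∏ i : Fin d,
            (Nat.ceil (L * Mb * Kinf ^ (d - 1) * d * Metric.diam D / (u * h i)) + 1) ∧
        ∀ x ∈ D, ∃ f ∈ F, ∀ y,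
          |b y * (∏ i, k ((x i - y i) / h i)) - f y| ≤ u :=
  covering_bound_weighted_kernel_class_general hd D hDb k L Kinf hL hK hLip hkb b Mb hMb hb h hh u
    hu
end

section
/- Let H be a nonempty finite set, D a nonempty set, and let f : D → ℝ, (b_h)_{h ∈ H} and (b_{h,η})_{(h,η) ∈ H×H} be bounded real-valued functions on D satisfying the symmetry b_{h,η} = b_{η,h} for all h, η ∈ H. Let A : H → [0,∞), and define Υ(h) := max_{η ∈ H} ( sup_{x ∈ D} |b_{h,η}(x) − b_η(x)| − A(η) )₊ for h ∈ H, where (·)₊ denotes the positive part. Let ĥ ∈ H be any minimiser of h ↦ Υ(h) + A(h) over H. Then for every h ∈ H, sup_{x ∈ D} |b_ĥ(x) − f(x)| ≤ 2(Υ(h) + A(h)) + sup_{x ∈ D} |b_h(x) − f(x)|. -/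
/-!
Pass through the doubly smoothed estimator `b_{h,ĥ} = b_{ĥ,h}`:
`|b_ĥ - f| ≤ |b_{h,ĥ} - b_ĥ| + |b_{ĥ,h} - b_h| + |b_h - f|`.
By the definition of `Υ` the first two terms are at most `Υ(h) + A(ĥ)` and `Υ(ĥ) + A(h)`,
whose sum is at most `2 (Υ(h) + A(h))` by minimality of `ĥ`.
-/

open Set

lemma bddAbove_range_abs_sub {D : Type*} {g k : D → ℝ}
    (hg : ∃ C, ∀ x, |g x| ≤ C) (hk : ∃ C, ∀ x, |k x| ≤ C) :
    BddAbove (range fun x => |g x - k x|) := by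
  obtain ⟨Cg, hCg⟩ := hg
  obtain ⟨Ck, hCk⟩ := hk
  refine ⟨Cg + Ck, ?_⟩
  rintro _ ⟨x, rfl⟩
  exact (abs_sub _ _).trans (add_le_add (hCg x) (hCk x))

lemma le_ciSup_max_zero {ι : Type*} [Finite ι] (u : ι → ℝ) (i : ι) :
    u i ≤ ⨆ j, max (u j) 0 :=
  (le_max_left _ 0).trans (le_ciSup (f := fun j => max (u j) 0) (finite_range _).bddAbove i)

theorem goldenshluger_lepski_oracle_general
    {H D : Type*} [Fintype H] [Nonempty D]
    (f : D → ℝ) (b : H → D → ℝ) (bb : H → H → D → ℝ)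
    (hf : ∃ C, ∀ x, |f x| ≤ C)
    (hb : ∀ h, ∃ C, ∀ x, |b h x| ≤ C)
    (hbb : ∀ h η, ∃ C, ∀ x, |bb h η x| ≤ C)
    (hsymm : ∀ h η, bb h η = bb η h)
    (A : H → ℝ)
    (Υ : H → ℝ)
    (hΥ : ∀ h, Υ h = ⨆ η, max ((⨆ x, |bb h η x - b η x|) - A η) 0)
    (hhat : H) (hmin : ∀ h, Υ hhat + A hhat ≤ Υ h + A h) :
    ∀ h, (⨆ x, |b hhat x - f x|) ≤ 2 * (Υ h + A h) + ⨆ x, |b h x - f x| := by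
  have hdev : ∀ h η x, |bb h η x - b η x| ≤ Υ h + A η := fun h η x => by
    have hx := le_ciSup (bddAbove_range_abs_sub (hbb h η) (hb η)) x
    have hη := le_ciSup_max_zero (fun η => (⨆ x, |bb h η x - b η x|) - A η) η
    linarith [hΥ h]
  intro h
  refine ciSup_le fun x => ?_
  calc |b hhat x - f x|
      ≤ |bb h hhat x - b hhat x| + |bb hhat h x - b h x| + |b h x - f x| := by
        rw [hsymm h hhat, abs_sub_comm (bb hhat h x)]
        linarith [abs_sub_le (b hhat x) (bb hhat h x) (f x),
          abs_sub_le (bb hhat h x) (b h x) (f x)]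
    _ ≤ (Υ h + A hhat) + (Υ hhat + A h) + ⨆ x, |b h x - f x| := by
        gcongr
        · exact hdev h hhat x
        · exact hdev hhat h x
        · exact le_ciSup (bddAbove_range_abs_sub (hb h) hf) x
    _ ≤ 2 * (Υ h + A h) + ⨆ x, |b h x - f x| := by linarith [hmin h]

/-- Deterministic oracle inequality of the Goldenshluger–Lepski bandwidth selection. -/
theorem goldenshluger_lepski_oracle
    {H D : Type*} [Fintype H] [Nonempty H] [Nonempty D]
    (f : D → ℝ) (b : H → D → ℝ) (bb : H → H → D → ℝ)
    (hf : ∃ C, ∀ x, |f x| ≤ C)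
    (hb : ∀ h, ∃ C, ∀ x, |b h x| ≤ C)
    (hbb : ∀ h η, ∃ C, ∀ x, |bb h η x| ≤ C)
    (hsymm : ∀ h η, bb h η = bb η h)
    (A : H → ℝ) (hA : ∀ h, 0 ≤ A h)
    (Υ : H → ℝ)
    (hΥ : ∀ h, Υ h = ⨆ η, max ((⨆ x, |bb h η x - b η x|) - A η) 0)
    (hhat : H) (hmin : ∀ h, Υ hhat + A hhat ≤ Υ h + A h) :
    ∀ h, (⨆ x, |b hhat x - f x|) ≤ 2 * (Υ h + A h) + ⨆ x, |b h x - f x| :=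
  goldenshluger_lepski_oracle_general f b bb hf hb hbb hsymm A Υ hΥ hhat hmin
end
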